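/- arXiv:2001.00857 — 4 statements merged into one kernel-verified Lean document; each statement's English description precedes it below -/
import Mathlib

section
/- Let Ω ⊂ ℝ^N be open with ∂Ω ≠ ∅. The distance function δ(x) = dist(x, ∂Ω) is differentiable at x ∈ Ω if and only if there exists a unique point y ∈ ∂Ω with δ(x) = |x − y|; in that case ∇δ(x) = (x − y)/|x − y| and |∇δ(x)| = 1. -/
open Metric

section Aux

open Set InnerProductSpace


lemma arith_low {d B c t A : ℝ} (hA0 : 0 ≤ A) (hAq : d^2 + 2*(d*B) - d*c*t ≤ A^2)
    (hBt1 : -t ≤ B) (hBt2 : B ≤ t) (ht0 : 0 ≤ t) (ht2 : t*(1+c)^2 ≤ d*c) (hc : 0 < c) :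
    d + B - c*t ≤ A := by
  by_cases hb : d + B - c * t ≤ 0
  · linarith
  · push_neg at hb
    have hct : 0 ≤ c * t := mul_nonneg hc.le ht0
    have h1 : (B - c*t)^2 ≤ ((1+c)*t)^2 :=
      sq_le_sq' (by nlinarith) (by nlinarith)
    have h2 : ((1+c)*t)^2 ≤ d*c*t := by nlinarith [mul_le_mul_of_nonneg_right ht2 ht0]
    have hb2 : (d + B - c*t)^2 ≤ A^2 := by nlinarith
    nlinarith

lemma arith_up {d B c t C : ℝ} (hC0 : 0 ≤ C) (hCsq : C^2 = d^2 + 2*(d*B) + t^2)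
    (hBt1 : -t ≤ B) (ht0 : 0 ≤ t) (ht1 : t ≤ 2*d*c) (hc : 0 < c) (hd : 0 < d) :
    C ≤ d + B + c * t := by
  have hR0 : 0 < d + B + c * t := by
    rcases le_or_gt 1 c with h1c | h1c
    · nlinarith
    · have h7 : t * (1 - c) ≤ 2*d*c*(1-c) :=
        mul_le_mul_of_nonneg_right ht1 (by linarith)
      nlinarith [sq_nonneg (1 - 2*c)]
  nlinarith [sq_nonneg (B + c*t), mul_nonneg ht0 (by linarith : (0:ℝ) ≤ 2*d*c - t)]


variable {E : Type*} [NormedAddCommGroup E] [InnerProductSpace ℝ E]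
  [ProperSpace E] [CompleteSpace E]

/-- Stability of the nearest point at a point of uniqueness. -/
lemma near_stab {F : Set E} (hF : IsClosed F)
    {x y : E} (hy : y ∈ F) (huniq : ∀ y' ∈ F, dist x y' = infDist x F → y' = y)
    {η : ℝ} (hη : 0 < η) :
    ∃ r > 0, ∀ z y', dist x z ≤ r → y' ∈ F → dist z y' = infDist z F → dist y' y ≤ η := by
  set d := infDist x F with hd
  set K := (F ∩ closedBall x (d + 1)) ∩ {p : E | η ≤ dist p y} with hK
  have hKc : IsCompact K :=
    ((isCompact_closedBall x (d + 1)).inter_left hF).inter_right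
      (isClosed_le continuous_const (continuous_id.dist continuous_const))
  have key : ∀ r > 0, r ≤ 1/2 → ∀ z y', dist x z ≤ r → y' ∈ F → dist z y' = infDist z F →
      η ≤ dist y' y → y' ∈ K := by
    intro r hr hr2 z y' hxz hy'F hy'd hfar
    refine ⟨⟨hy'F, ?_⟩, hfar⟩
    have h1 : infDist z F ≤ d + dist z x := infDist_le_infDist_add_dist
    have h2 : dist x y' ≤ dist x z + dist z y' := dist_triangle _ _ _
    have : dist x y' ≤ d + 2 * r := by
      rw [dist_comm z x] at h1
      linarith [h2, hy'd ▸ h1, hxz]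
    have : dist y' x ≤ d + 2 * r := by rwa [dist_comm]
    exact mem_closedBall.2 (by linarith)
  rcases eq_empty_or_nonempty K with hKe | hKne
  · refine ⟨1/2, by norm_num, fun z y' hxz hy'F hy'd => ?_⟩
    by_contra hcon
    have := key (1/2) (by norm_num) le_rfl z y' hxz hy'F hy'd (le_of_not_ge hcon)
    rw [hKe] at this; exact this
  · obtain ⟨y₀, hy₀K, hy₀m⟩ := hKc.exists_isMinOn hKne
      (continuous_const.dist continuous_id).continuousOn
    set m := dist x y₀ with hm
    have hmd : d < m := by
      rcases lt_or_eq_of_le (infDist_le_dist_of_mem hy₀K.1.1) with h | h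
      · exact h
      · exfalso
        have h0 : η ≤ dist y₀ y := hy₀K.2
        rw [huniq y₀ hy₀K.1.1 h.symm, dist_self] at h0
        linarith
    refine ⟨min (1/2) ((m - d)/4), lt_min (by norm_num) (by linarith), fun z y' hxz hy'F hy'd => ?_⟩
    by_contra hcon
    have hmem := key _ (lt_min (by norm_num) (by linarith)) (min_le_left _ _) z y'
      hxz hy'F hy'd (le_of_not_ge hcon)
    have h3 : m ≤ dist x y' := hy₀m hmem
    -- also dist x y' ≤ d + 2r with r ≤ (m-d)/4
    have h1 : infDist z F ≤ d + dist z x := infDist_le_infDist_add_dist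
    have h2 : dist x y' ≤ dist x z + dist z y' := dist_triangle _ _ _
    have hr4 : dist x z ≤ (m - d)/4 := le_trans hxz (min_le_right _ _)
    rw [dist_comm z x] at h1
    rw [hy'd] at h2
    linarith

/-- If `y` is a nearest point in `F` to `x` at positive distance and the distance function
has gradient `g` at `x`, then `g = (x-y)/‖x-y‖`. -/
lemma grad_eq_of_near {F : Set E} {x y g : E} (hy : y ∈ F)
    (hyd : dist x y = infDist x F) (hdpos : 0 < infDist x F)
    (hg : HasGradientAt (fun z => infDist z F) g x) :
    g = ‖x - y‖⁻¹ • (x - y) := by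
  set d := infDist x F with hd
  have hxy : ‖x - y‖ = d := by rw [← dist_eq_norm, hyd]
  set u : E := d⁻¹ • (y - x) with hu
  have hdu : d • u = y - x := by
    rw [hu, smul_smul, mul_inv_cancel₀ hdpos.ne', one_smul]
  have hnu : ‖u‖ = 1 := by
    rw [hu, norm_smul, norm_sub_rev, hxy, Real.norm_eq_abs, abs_inv,
      abs_of_pos hdpos, inv_mul_cancel₀ hdpos.ne']
  -- the distance is exactly d - t along the segment towards y
  have hray : ∀ t : ℝ, 0 ≤ t → t ≤ d → infDist (x + t • u) F = d - t := by
    intro t ht0 htd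
    have hub : infDist (x + t • u) F ≤ d - t := by
      have : dist (x + t • u) y = d - t := by
        rw [dist_eq_norm]
        have : x + t • u - y = (t - d) • u := by
          rw [sub_smul, hdu]; abel
        rw [this, norm_smul, hnu, mul_one, Real.norm_eq_abs, abs_of_nonpos (by linarith)]
        ring
      calc infDist (x + t • u) F ≤ dist (x + t • u) y := infDist_le_dist_of_mem hy
        _ = d - t := this
    have hlb : d - t ≤ infDist (x + t • u) F := by
      have h1 : infDist x F ≤ infDist (x + t • u) F + dist x (x + t • u) :=
        infDist_le_infDist_add_dist
      have h2 : dist x (x + t • u) = t := by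
        rw [dist_eq_norm]
        simp [norm_smul, hnu, abs_of_nonneg ht0]
      rw [h2] at h1
      linarith [h1]
    linarith
  -- derivative along the ray
  have hφ : HasDerivAt (fun t : ℝ => x + t • u) u 0 := by
    simpa using ((hasDerivAt_id (0 : ℝ)).smul_const u).const_add x
  have hF' : HasFDerivAt (fun z => infDist z F) (toDual ℝ E g) x := hg.hasFDerivAt
  have hcomp : HasDerivAt (fun t : ℝ => infDist (x + t • u) F) (toDual ℝ E g u) 0 := by
    have := hF'.comp_hasDerivAt_of_eq 0 hφ (by simp)
    exact this
  have hIci : HasDerivWithinAt (fun t : ℝ => infDist (x + t • u) F) (toDual ℝ E g u)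
      (Ici (0:ℝ)) 0 := hcomp.hasDerivWithinAt
  have heq : (fun t : ℝ => d - t) =ᶠ[nhdsWithin 0 (Ici (0:ℝ))]
      (fun t : ℝ => infDist (x + t • u) F) := by
    filter_upwards [Icc_mem_nhdsGE hdpos] with t ht
    exact (hray t ht.1 ht.2).symm
  have h2 : HasDerivWithinAt (fun t : ℝ => d - t) (toDual ℝ E g u) (Ici (0:ℝ)) 0 :=
    hIci.congr_of_eventuallyEq heq (by simpa using (hray 0 le_rfl hdpos.le).symm)
  have h3 : HasDerivWithinAt (fun t : ℝ => d - t) (-1) (Ici (0:ℝ)) 0 :=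
    ((hasDerivAt_id (0:ℝ)).const_sub d).hasDerivWithinAt
  have hUD : UniqueDiffWithinAt ℝ (Ici (0:ℝ)) 0 := uniqueDiffOn_Ici 0 0 self_mem_Ici
  have hgu : (inner ℝ g u : ℝ) = -1 := by
    rw [← toDual_apply_apply, ← h2.derivWithin hUD]
    exact h3.derivWithin hUD
  -- norm bound
  have hlip : LipschitzWith 1 (fun z : E => infDist z F) := lipschitz_infDist_pt F
  have hgn : ‖g‖ ≤ 1 := by
    have h := hF'.le_of_lipschitz hlip
    rwa [(toDual ℝ E).norm_map g, NNReal.coe_one] at h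
  -- conclude g = -u
  have hsq : ‖g + u‖ ^ 2 ≤ 0 := by
    rw [norm_add_sq_real, hgu, hnu]
    nlinarith [norm_nonneg g]
  have hgu0 : g + u = 0 := by
    have h1 : ‖g + u‖ = 0 := by nlinarith [norm_nonneg (g + u)]
    exact norm_eq_zero.1 h1
  have : g = -u := by linear_combination (norm := module) hgu0
  rw [this, hu, hxy, ← smul_neg, neg_sub]

lemma hasGradient_of_unique {F : Set E} (hF : IsClosed F) (hFne : F.Nonempty)
    {x y : E} (hy : y ∈ F) (hyd : dist x y = infDist x F) (hdpos : 0 < infDist x F)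
    (huniq : ∀ y' ∈ F, dist x y' = infDist x F → y' = y) :
    HasGradientAt (fun z => infDist z F) (‖x - y‖⁻¹ • (x - y)) x := by
  set d := infDist x F with hd
  have hxy : ‖x - y‖ = d := by rw [← dist_eq_norm, hyd]
  set v : E := ‖x - y‖⁻¹ • (x - y) with hv
  have hnv : ‖v‖ = 1 := by
    rw [hv, norm_smul, Real.norm_eq_abs, abs_inv, abs_of_pos (by rw [hxy]; exact hdpos),
      inv_mul_cancel₀ (by rw [hxy]; exact hdpos.ne')]
  have hdv : d • v = x - y := by
    rw [hv, ← hxy, smul_smul, mul_inv_cancel₀ (by rw [hxy]; exact hdpos.ne'), one_smul]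
  rw [hasGradientAt_iff_isLittleO_nhds_zero, Asymptotics.isLittleO_iff]
  intro c hc
  obtain ⟨r, hr, hstab⟩ := near_stab hF hy huniq (show (0:ℝ) < d * c / 2 by positivity)
  have hρ : (0:ℝ) < min r (min (2*d*c) (d*c/(1+c)^2)) :=
    lt_min hr (lt_min (by positivity) (by positivity))
  filter_upwards [Metric.ball_mem_nhds (0:E) hρ] with h hmem
  set t := ‖h‖ with ht
  have ht0 : 0 ≤ t := norm_nonneg h
  have hmem' : t < min r (min (2*d*c) (d*c/(1+c)^2)) := by
    simpa [ht, dist_eq_norm] using hmem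
  have htr : t ≤ r := le_of_lt (lt_of_lt_of_le hmem' (min_le_left _ _))
  have ht1 : t ≤ 2*d*c :=
    le_of_lt (lt_of_lt_of_le hmem' ((min_le_right _ _).trans (min_le_left _ _)))
  have ht2 : t * (1+c)^2 ≤ d*c := by
    have h5 : t ≤ d*c/(1+c)^2 :=
      le_of_lt (lt_of_lt_of_le hmem' ((min_le_right _ _).trans (min_le_right _ _)))
    rw [le_div_iff₀ (by positivity)] at h5
    linarith
  set B : ℝ := inner ℝ v h with hB
  have hBt : |B| ≤ t := by
    have h6 := abs_real_inner_le_norm v h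
    rwa [hnv, one_mul] at h6
  have hBt1 : -t ≤ B := (abs_le.1 hBt).1
  have hBt2 : B ≤ t := (abs_le.1 hBt).2
  set A := infDist (x + h) F with hA
  have hA0 : (0:ℝ) ≤ A := by rw [hA]; exact infDist_nonneg
  -- upper bound
  have hub : A - d - B ≤ c * t := by
    have hC : A ≤ ‖(x - y) + h‖ := by
      have h8 : dist (x + h) y = ‖(x - y) + h‖ := by
        rw [dist_eq_norm, show x + h - y = x - y + h from by abel]
      rw [hA, ← h8]
      exact infDist_le_dist_of_mem hy
    have hCsq : ‖(x - y) + h‖^2 = d^2 + 2*(d*B) + t^2 := by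
      rw [norm_add_sq_real, hxy, ← hdv, real_inner_smul_left]
    have hCR : ‖(x - y) + h‖ ≤ d + B + c * t :=
      arith_up (norm_nonneg _) hCsq hBt1 ht0 ht1 hc hdpos
    linarith
  -- lower bound
  have hlb : d + B - c * t ≤ A := by
    obtain ⟨y', hy'F, hy'd⟩ := hF.exists_infDist_eq_dist hFne (x + h)
    have hxz : dist x (x + h) ≤ r := by
      rw [dist_eq_norm]
      simpa using htr
    have he : dist y' y ≤ d * c / 2 := hstab (x + h) y' hxz hy'F hy'd.symm
    have hA' : A = ‖(x - y') + h‖ := by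
      rw [hA, hy'd, dist_eq_norm, show x + h - y' = x - y' + h from by abel]
    have hAsq : A^2 = ‖x - y'‖^2 + 2*(inner ℝ (x - y') h : ℝ) + t^2 := by
      rw [hA', norm_add_sq_real]
    have hny' : d ≤ ‖x - y'‖ := by
      rw [← dist_eq_norm]; exact infDist_le_dist_of_mem hy'F
    have hinner : d * B - (d*c/2) * t ≤ (inner ℝ (x - y') h : ℝ) := by
      have hsplit : (inner ℝ (x - y') h : ℝ)
          = (inner ℝ (x - y) h : ℝ) + (inner ℝ (y - y') h : ℝ) := by
        rw [← inner_add_left, show x - y + (y - y') = x - y' from by abel]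
      have h1 : (inner ℝ (x - y) h : ℝ) = d * B := by rw [← hdv, real_inner_smul_left]
      have h2 : |(inner ℝ (y - y') h : ℝ)| ≤ (d*c/2) * t := by
        calc |(inner ℝ (y - y') h : ℝ)| ≤ ‖y - y'‖ * ‖h‖ := abs_real_inner_le_norm _ _
          _ ≤ (d*c/2) * t := by
              have h9 : ‖y - y'‖ = dist y' y := by rw [← dist_eq_norm, dist_comm]
              rw [h9]
              exact mul_le_mul_of_nonneg_right he ht0
      have h3 := (abs_le.1 h2).1
      rw [hsplit, h1]
      linarith
    have hnn : d^2 ≤ ‖x - y'‖^2 := pow_le_pow_left₀ hdpos.le hny' 2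
    have hAq : d^2 + 2*(d*B) - d*c*t ≤ A^2 := by
      rw [hAsq]
      linarith [sq_nonneg t, hinner, hnn]
    exact arith_low hA0 hAq hBt1 hBt2 ht0 ht2 hc
  have habs : |A - d - B| ≤ c * t := abs_le.2 ⟨by linarith, by linarith⟩
  rw [Real.norm_eq_abs, ← hd]
  exact habs

end Aux

/-- For an open set `Ω ⊆ ℝ^N` with nonempty boundary, the distance function
`δ(x) = dist(x, ∂Ω)` is differentiable at `x ∈ Ω` iff there is a unique nearest boundary
point `y`; in that case `∇δ(x) = (x - y)/|x - y|` and `|∇δ(x)| = 1`. -/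
theorem distBoundary_differentiable_iff (N : ℕ)
    (Ω : Set (EuclideanSpace ℝ (Fin N))) (hΩ : IsOpen Ω)
    (hfr : (frontier Ω).Nonempty)
    (δ : EuclideanSpace ℝ (Fin N) → ℝ)
    (hδ : δ = fun x => Metric.infDist x (frontier Ω))
    (x : EuclideanSpace ℝ (Fin N)) (hx : x ∈ Ω) :
    (DifferentiableAt ℝ δ x ↔ ∃! y, y ∈ frontier Ω ∧ dist x y = δ x) ∧
    (∀ y, y ∈ frontier Ω → dist x y = δ x → DifferentiableAt ℝ δ x →
      gradient δ x = ‖x - y‖⁻¹ • (x - y) ∧ ‖gradient δ x‖ = 1) := by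
  subst hδ
  beta_reduce
  set F := frontier Ω with hFdef
  have hF : IsClosed F := isClosed_frontier
  have hxF : x ∉ F := by
    rw [hFdef, hΩ.frontier_eq]
    exact fun hmem => hmem.2 hx
  have hdpos : 0 < infDist x F := (hF.notMem_iff_infDist_pos hfr).1 hxF
  have hδx : ∀ z, (fun w => infDist w F) z = infDist z F := fun _ => rfl
  -- a helper to extract y from the gradient value
  have key : ∀ (g : EuclideanSpace ℝ (Fin N)),
      HasGradientAt (fun z => infDist z F) g x →
      ∀ y ∈ F, dist x y = infDist x F → y = x - infDist x F • g := by
    intro g hg y hyF hyd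
    have e := grad_eq_of_near hyF hyd hdpos hg
    have hxy : ‖x - y‖ = infDist x F := by rw [← dist_eq_norm, hyd]
    rw [e, hxy, smul_smul, mul_inv_cancel₀ hdpos.ne', one_smul]
    abel
  constructor
  · constructor
    · intro hdiff
      have hg := hdiff.hasGradientAt
      obtain ⟨y₀, hy₀F, hy₀d⟩ := hF.exists_infDist_eq_dist hfr x
      refine ⟨y₀, ⟨hy₀F, hy₀d.symm⟩, ?_⟩
      rintro y' ⟨hy'F, hy'd⟩
      rw [key _ hg y' hy'F hy'd, key _ hg y₀ hy₀F hy₀d.symm]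
    · rintro ⟨y, ⟨hyF, hyd⟩, huniq⟩
      exact (hasGradient_of_unique hF hfr hyF hyd hdpos
        (fun y' h1 h2 => huniq y' ⟨h1, h2⟩)).differentiableAt
  · intro y hyF hyd hdiff
    have hg := hdiff.hasGradientAt
    have e := grad_eq_of_near hyF hyd hdpos hg
    refine ⟨e, ?_⟩
    have hxy : ‖x - y‖ = infDist x F := by rw [← dist_eq_norm, hyd]
    rw [e, norm_smul, Real.norm_eq_abs, abs_inv, hxy, abs_of_pos hdpos,
      inv_mul_cancel₀ hdpos.ne']
end

section
/- Let N̄ = N + 2γ with γ ≥ 0 and N ≥ 5 + 2γ. For n ≥ 1 set λ_n = −n(n + N̄ − 2) and D_n = λ_n(λ_n − (N̄² − 8N̄)/4) − N̄²γ. Then D_1 = ((N − 5 − 2γ)N̄² + 4)/4 ≥ 0, D_2 = 2N·N̄²/4 ≥ 0, and D_n ≥ D_2 ≥ 0 for all n ≥ 2. -/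
/-- Nonnegativity of the coefficients `D_n` in the proof of the sharp Hardy–Rellich
inequality for Dunkl operators: with `N̄ = N + 2γ`, `γ ≥ 0`, `N ≥ 5 + 2γ`,
`λ_n = -n(n + N̄ - 2)` and `D_n = λ_n(λ_n - (N̄² - 8N̄)/4) - N̄²γ`, one has
`D_1 = ((N - 5 - 2γ)N̄² + 4)/4 ≥ 0`, `D_2 = 2N·N̄²/4 ≥ 0`, and `D_n ≥ D_2` for `n ≥ 2`. -/
theorem hardy_rellich_coefficients (N : ℕ) (γ : ℝ) (hγ : 0 ≤ γ)
    (hN : (5 : ℝ) + 2 * γ ≤ N)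
    (Nbar : ℝ) (hNbar : Nbar = N + 2 * γ)
    (lam D : ℕ → ℝ)
    (hlam : ∀ n, lam n = -(n * (n + Nbar - 2)))
    (hD : ∀ n, D n = lam n * (lam n - (Nbar ^ 2 - 8 * Nbar) / 4) - Nbar ^ 2 * γ) :
    D 1 = (((N : ℝ) - 5 - 2 * γ) * Nbar ^ 2 + 4) / 4 ∧ 0 ≤ D 1 ∧
    D 2 = 2 * N * Nbar ^ 2 / 4 ∧ 0 ≤ D 2 ∧
    ∀ n ≥ 2, D 2 ≤ D n := by
  have hNb : (5:ℝ) ≤ Nbar := by rw [hNbar]; linarith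
  refine ⟨?_, ?_, ?_, ?_, ?_⟩
  · rw [hD, hlam]; push_cast; rw [hNbar]; ring
  · rw [hD, hlam]; push_cast
    nlinarith [sq_nonneg Nbar, mul_nonneg (mul_nonneg hγ hγ) hγ, sq_nonneg (Nbar - 5)]
  · rw [hD, hlam]; push_cast; rw [hNbar]; ring
  · rw [hD, hlam]; push_cast
    nlinarith [sq_nonneg Nbar, mul_nonneg hγ hγ]
  · intro n hn
    have hm : (2:ℝ) ≤ (n:ℝ) := by exact_mod_cast hn
    rw [hD, hD, hlam, hlam]
    push_cast
    nlinarith [mul_nonneg (mul_nonneg (sub_nonneg.2 hm) (by nlinarith : (0:ℝ) ≤ (n:ℝ) + Nbar))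
      (by nlinarith : (0:ℝ) ≤ Nbar^2/4 + (n:ℝ)^2 + (n:ℝ)*(Nbar-2))]
end

section
/- Let N̄ > 2 and for ε > 0 define u_ε(r) = 1 for r < 1 and u_ε(r) = r^{−(N̄−2+ε)/2} for r > 1. Then the ratio (∫_1^∞ (u_ε'' + ((N̄−1)/r) u_ε')² r^{N̄+1} dr) / (∫_1^∞ |u_ε'|² r^{N̄−1} dr) tends to (N̄−2)²/4 as ε → 0⁺. -/
open Real MeasureTheory Filter

/-- Sharpness of the constant `(N̄-2)²/4` in `∫|x|²|Δ_k u|² dμ_k ≥ ((N̄-2)²/4)∫|∇_k u|² dμ_k`: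
for `u_ε(r) = 1` on `r < 1` and `r^{-(N̄-2+ε)/2}` on `r > 1`, the ratio
`∫₁^∞ (u_ε'' + ((N̄-1)/r)u_ε')² r^{N̄+1} dr / ∫₁^∞ |u_ε'|² r^{N̄-1} dr` tends to
`(N̄-2)²/4` as `ε → 0⁺`. -/
theorem rellich_sharpness_ratio (Nbar : ℝ) (hN : 2 < Nbar)
    (u : ℝ → ℝ → ℝ)
    (hu : u = fun ε r => if r < 1 then (1 : ℝ) else r ^ (-(Nbar - 2 + ε) / 2)) :
    Tendsto
      (fun ε =>
        (∫ r in Set.Ioi (1:ℝ),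
            (deriv (deriv (u ε)) r + (Nbar - 1) / r * deriv (u ε) r) ^ 2 * r ^ (Nbar + 1)) /
          (∫ r in Set.Ioi (1:ℝ), (deriv (u ε) r) ^ 2 * r ^ (Nbar - 1)))
      (nhdsWithin 0 (Set.Ioi 0)) (nhds ((Nbar - 2) ^ 2 / 4)) := by
  subst hu
  have main : (fun ε =>
      (∫ r in Set.Ioi (1:ℝ),
            (deriv (deriv (fun r => if r < 1 then (1:ℝ) else r ^ (-(Nbar - 2 + ε) / 2))) r
              + (Nbar - 1) / r *
                deriv (fun r => if r < 1 then (1:ℝ) else r ^ (-(Nbar - 2 + ε) / 2)) r) ^ 2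
              * r ^ (Nbar + 1)) /
          (∫ r in Set.Ioi (1:ℝ),
            (deriv (fun r => if r < 1 then (1:ℝ) else r ^ (-(Nbar - 2 + ε) / 2)) r) ^ 2
              * r ^ (Nbar - 1))
        ) =ᶠ[nhdsWithin (0:ℝ) (Set.Ioi 0)] fun ε => ((Nbar - 2 - ε) / 2) ^ 2 := by
    filter_upwards [self_mem_nhdsWithin] with ε (hε : 0 < ε)
    set p : ℝ := -(Nbar - 2 + ε) / 2 with hp
    have hplt : p < 0 := by rw [hp]; nlinarith
    have hpne : p ≠ 0 := ne_of_lt hplt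
    have hεne : ε ≠ 0 := ne_of_gt hε
    have hd1 : ∀ r ∈ Set.Ioi (1:ℝ),
        deriv (fun r => if r < 1 then (1:ℝ) else r ^ p) r = p * r ^ (p - 1) := by
      intro r hr
      have hr1 : (1:ℝ) < r := hr
      have heq : (fun r => if r < 1 then (1:ℝ) else r ^ p) =ᶠ[nhds r] fun r => r ^ p := by
        filter_upwards [isOpen_Ioi.mem_nhds hr] with x (hx : 1 < x)
        rw [if_neg (not_lt.2 hx.le)]
      rw [heq.deriv_eq, Real.deriv_rpow_const r p]
    have hd2 : ∀ r ∈ Set.Ioi (1:ℝ),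
        deriv (deriv (fun r => if r < 1 then (1:ℝ) else r ^ p)) r
          = p * ((p - 1) * r ^ (p - 2)) := by
      intro r hr
      have hr1 : (1:ℝ) < r := hr
      have heq : deriv (fun r => if r < 1 then (1:ℝ) else r ^ p)
          =ᶠ[nhds r] fun x => p * x ^ (p - 1) := by
        filter_upwards [isOpen_Ioi.mem_nhds hr] with x hx
        exact hd1 x hx
      rw [heq.deriv_eq]
      have h := ((Real.hasDerivAt_rpow_const (x := r) (p := p - 1)
        (Or.inl (by positivity : r ≠ 0))).const_mul p).deriv
      rw [h, show p - 1 - 1 = p - 2 from by ring]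
    have hI1 : (∫ r in Set.Ioi (1:ℝ),
        (deriv (deriv (fun r => if r < 1 then (1:ℝ) else r ^ p)) r
          + (Nbar - 1) / r * deriv (fun r => if r < 1 then (1:ℝ) else r ^ p) r) ^ 2
          * r ^ (Nbar + 1))
        = (p * (p + Nbar - 2)) ^ 2 * (1 / ε) := by
      rw [MeasureTheory.setIntegral_congr_fun measurableSet_Ioi
        (g := fun r => (p * (p + Nbar - 2)) ^ 2 * r ^ (-1 - ε))]
      · rw [MeasureTheory.integral_const_mul,
          integral_Ioi_rpow_of_lt (by linarith) one_pos]
        rw [Real.one_rpow]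
        ring_nf
      · intro r hr
        have hr1 : (1:ℝ) < r := hr
        have hr0 : (0:ℝ) < r := by linarith
        simp only
        rw [hd1 r hr, hd2 r hr]
        have h1 : (Nbar - 1) / r * (p * r ^ (p - 1)) = p * ((Nbar - 1) * r ^ (p - 2)) := by
          have : r ^ (p - 1) = r ^ (p - 2) * r := by
            rw [← Real.rpow_add_one (ne_of_gt hr0)]; ring_nf
          rw [this]; field_simp
        rw [h1]
        have h2 : p * ((p - 1) * r ^ (p - 2)) + p * ((Nbar - 1) * r ^ (p - 2))
            = (p * (p + Nbar - 2)) * r ^ (p - 2) := by ring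
        rw [h2, mul_pow, mul_assoc]
        congr 1
        rw [← Real.rpow_natCast (r ^ (p - 2)) 2, ← Real.rpow_mul hr0.le,
          ← Real.rpow_add hr0]
        congr 1
        push_cast
        rw [hp]; ring
    have hI2 : (∫ r in Set.Ioi (1:ℝ),
        (deriv (fun r => if r < 1 then (1:ℝ) else r ^ p) r) ^ 2 * r ^ (Nbar - 1))
        = p ^ 2 * (1 / ε) := by
      rw [MeasureTheory.setIntegral_congr_fun measurableSet_Ioi
        (g := fun r => p ^ 2 * r ^ (-1 - ε))]
      · rw [MeasureTheory.integral_const_mul,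
          integral_Ioi_rpow_of_lt (by linarith) one_pos]
        rw [Real.one_rpow]
        ring_nf
      · intro r hr
        have hr1 : (1:ℝ) < r := hr
        have hr0 : (0:ℝ) < r := by linarith
        simp only
        rw [hd1 r hr, mul_pow, mul_assoc]
        congr 1
        rw [← Real.rpow_natCast (r ^ (p - 1)) 2, ← Real.rpow_mul hr0.le,
          ← Real.rpow_add hr0]
        congr 1
        push_cast
        rw [hp]; ring
    rw [hI1, hI2]
    have hkey : p + Nbar - 2 = (Nbar - 2 - ε) / 2 := by rw [hp]; ring
    rw [hkey]
    field_simp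
  have hcont : Continuous fun ε : ℝ => ((Nbar - 2 - ε) / 2) ^ 2 := by fun_prop
  have h := (hcont.tendsto 0).mono_left
    (nhdsWithin_le_nhds : nhdsWithin (0:ℝ) (Set.Ioi 0) ≤ nhds 0)
  have h2 : ((Nbar - 2 - 0) / 2) ^ 2 = (Nbar - 2) ^ 2 / 4 := by ring
  exact Tendsto.congr' main.symm (h2 ▸ h)
end

section
/- Let N̄ > 2. For every radial u ∈ C_0^∞((0,∞)) one has ∫_0^∞ (u''(r) + ((N̄−1)/r) u'(r))² r^{N̄+1} dr ≥ ((N̄−2)²/4) ∫_0^∞ |u'(r)|² r^{N̄−1} dr. -/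
open Real MeasureTheory

/-- Radial case of the sharp inequality `∫|x|²|Δ_k u|² dμ_k ≥ ((N̄-2)²/4)∫|∇_k u|² dμ_k`:
for `N̄ > 2` and `u ∈ C_0^∞((0,∞))`,
`∫₀^∞ (u'' + ((N̄-1)/r)u')² r^{N̄+1} dr ≥ ((N̄-2)²/4) ∫₀^∞ |u'|² r^{N̄-1} dr`. -/
theorem radial_rellich_inequality (Nbar : ℝ) (hN : 2 < Nbar)
    (u : ℝ → ℝ) (hu : ContDiff ℝ (⊤ : ℕ∞) u) (hsupp : HasCompactSupport u)
    (hsub : tsupport u ⊆ Set.Ioi 0) :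
    ∫ r in Set.Ioi (0:ℝ),
        (deriv (deriv u) r + (Nbar - 1) / r * deriv u r) ^ 2 * r ^ (Nbar + 1) ≥
      (Nbar - 2) ^ 2 / 4 * ∫ r in Set.Ioi (0:ℝ), (deriv u r) ^ 2 * r ^ (Nbar - 1) := by
  -- trivial case: empty support
  by_cases hKe : tsupport u = ∅
  · have hu0 : u = 0 := tsupport_eq_empty_iff.mp hKe
    subst hu0
    have hd : deriv (0:ℝ→ℝ) = 0 := by
      funext x
      exact deriv_const x 0
    simp [hd]
  -- basic smoothness facts
  have h1 : ContDiff ℝ (((⊤:ℕ∞) : WithTop ℕ∞)) u := hu.of_le (by simp)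
  have h2 := contDiff_infty_iff_deriv.mp h1
  have h3 := contDiff_infty_iff_deriv.mp h2.2
  set v : ℝ → ℝ := deriv u with hvdef
  have hv_cont : Continuous v := h2.2.continuous
  have hv_diff : Differentiable ℝ v := h3.1
  have hv'_cont : Continuous (deriv v) := h3.2.continuous
  -- the support
  set K : Set ℝ := tsupport u with hKdef
  have hKc : IsCompact K := hsupp
  have hKcl : IsClosed K := isClosed_tsupport u
  have hKne : K.Nonempty := Set.nonempty_iff_ne_empty.mpr hKe
  have hv0 : ∀ r ∉ K, v r = 0 := by
    intro r hr
    have : r ∉ Function.support v := fun h => hr (support_deriv_subset h)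
    simpa using Function.notMem_support.mp this
  have hv'0 : ∀ r ∉ K, deriv v r = 0 := by
    intro r hr
    have hsub2 : Function.support (deriv v) ⊆ K := by
      refine (support_deriv_subset).trans ?_
      refine closure_minimal ?_ hKcl
      intro x hx
      exact support_deriv_subset hx
    exact Function.notMem_support.mp (fun h => hr (hsub2 h))
  -- bounds on the support
  obtain ⟨ε, hεK, hεlb⟩ := hKc.exists_isMinOn hKne (continuous_id.continuousOn)
  have hε : 0 < ε := hsub hεK
  have hKlb : ∀ r ∈ K, ε ≤ r := fun r hr => hεlb hr
  obtain ⟨R, hRub⟩ := hKc.bddAbove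
  have hKub : ∀ r ∈ K, r ≤ R := fun r hr => hRub hr
  have hnotK_lt : ∀ r : ℝ, r < ε → r ∉ K := fun r hr hrK => absurd (hKlb r hrK) (not_le.mpr hr)
  have hnotK_gt : ∀ r : ℝ, R < r → r ∉ K := fun r hr hrK => absurd (hKub r hrK) (not_le.mpr hr)
  -- the four integrands
  set c := Nbar with hcdef
  set g : ℝ → ℝ := fun r => (deriv v r + (c - 1) / r * v r) ^ 2 * r ^ (c + 1) with hgdef
  set q : ℝ → ℝ := fun r =>
    (deriv v r * r ^ ((c + 1) / 2) + c / 2 * v r * r ^ ((c - 1) / 2)) ^ 2 with hqdef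
  set h : ℝ → ℝ := fun r => (v r) ^ 2 * r ^ (c - 1) with hhdef
  set G : ℝ → ℝ := fun r =>
    (c - 2) / 2 * (2 * v r * deriv v r * r ^ c + (v r) ^ 2 * (c * r ^ (c - 1))) with hGdef
  set F : ℝ → ℝ := fun r => (c - 2) / 2 * ((v r) ^ 2 * r ^ c) with hFdef
  have hc2 : (2:ℝ) < c := hN
  -- F has derivative G everywhere
  have hFG : ∀ r : ℝ, HasDerivAt F (G r) r := by
    intro r
    rcases lt_or_ge r ε with hr | hr
    · -- locally zero
      have hev : F =ᶠ[nhds r] (fun _ => 0) := by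
        filter_upwards [Iio_mem_nhds hr] with x hx
        simp [hFdef, hv0 x (hnotK_lt x hx)]
      have hG0 : G r = 0 := by
        simp [hGdef, hv0 r (hnotK_lt r hr), hv'0 r (hnotK_lt r hr)]
      rw [hG0]
      exact (hasDerivAt_const r (0:ℝ)).congr_of_eventuallyEq hev
    · have hr0 : 0 < r := lt_of_lt_of_le hε hr
      have hd1 : HasDerivAt (fun x => (v x) ^ 2) (2 * v r * deriv v r) r := by
        have := ((hv_diff r).hasDerivAt).fun_pow 2
        simpa [mul_comm, mul_assoc, mul_left_comm] using this
      have hd2 : HasDerivAt (fun x : ℝ => x ^ c) (c * r ^ (c - 1)) r :=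
        Real.hasDerivAt_rpow_const (Or.inl hr0.ne')
      have := (hd1.mul hd2).const_mul ((c - 2) / 2)
      simpa [hFdef, hGdef, mul_comm, mul_assoc, mul_left_comm] using this
  -- continuity of the pieces
  have hrp : ∀ p : ℝ, 0 ≤ p → Continuous (fun x : ℝ => x ^ p) := fun p hp =>
    Real.continuous_rpow_const hp
  have hq_cont : Continuous q := by
    apply Continuous.pow
    exact (hv'_cont.mul (hrp _ (by linarith))).add
      ((continuous_const.mul hv_cont).mul (hrp _ (by linarith)))
  have hh_cont : Continuous h := (hv_cont.pow 2).mul (hrp _ (by linarith))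
  have hG_cont : Continuous G := by
    apply continuous_const.mul
    exact (((continuous_const.mul hv_cont).mul hv'_cont).mul (hrp _ (by linarith))).add
      ((hv_cont.pow 2).mul (continuous_const.mul (hrp _ (by linarith))))
  -- compact support of the pieces
  have hq_supp : HasCompactSupport q :=
    HasCompactSupport.intro hKc (fun x hx => by simp [hqdef, hv0 x hx, hv'0 x hx])
  have hh_supp : HasCompactSupport h :=
    HasCompactSupport.intro hKc (fun x hx => by simp [hhdef, hv0 x hx])
  have hG_supp : HasCompactSupport G :=
    HasCompactSupport.intro hKc (fun x hx => by simp [hGdef, hv0 x hx, hv'0 x hx])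
  have hq_int : Integrable q := hq_cont.integrable_of_hasCompactSupport hq_supp
  have hh_int : Integrable h := hh_cont.integrable_of_hasCompactSupport hh_supp
  have hG_int : Integrable G := hG_cont.integrable_of_hasCompactSupport hG_supp
  -- the integral of G vanishes
  have hGzero : ∫ r, G r = 0 := by
    have hεR : ε ≤ R := hKub ε hεK
    have hab : (-1 : ℝ) ≤ R + 1 := by linarith
    have hFa : F (-1) = 0 := by
      have : (-1:ℝ) ∉ K := hnotK_lt (-1) (by linarith)
      simp [hFdef, hv0 (-1) this]
    have hFb : F (R+1) = 0 := by
      have : (R+1:ℝ) ∉ K := hnotK_gt (R+1) (by linarith)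
      simp [hFdef, hv0 (R+1) this]
    have hint : ∫ x in (-1:ℝ)..(R+1), G x = F (R+1) - F (-1) :=
      intervalIntegral.integral_eq_sub_of_hasDerivAt (fun x _ => hFG x)
        (hG_cont.intervalIntegrable _ _)
    have heq : ∫ r, G r = ∫ x in Set.Ioc (-1:ℝ) (R+1), G x := by
      refine (setIntegral_eq_integral_of_forall_compl_eq_zero ?_).symm
      intro x hx
      have hxK : x ∉ K := by
        intro hxK
        exact hx ⟨by linarith [hKlb x hxK], by linarith [hKub x hxK]⟩
      simp [hGdef, hv0 x hxK, hv'0 x hxK]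
    rw [heq, ← intervalIntegral.integral_of_le hab, hint, hFa, hFb, sub_zero]
  -- the pointwise identity
  have hkey : ∀ r : ℝ, g r = q r + G r + (c - 2) ^ 2 / 4 * h r := by
    intro r
    rcases le_or_gt r 0 with hr | hr
    · have hrK : r ∉ K := fun hrK => absurd (lt_of_lt_of_le hε (hKlb r hrK)) (not_lt.mpr hr)
      simp [hgdef, hqdef, hGdef, hhdef, hv0 r hrK, hv'0 r hrK]
    · have hP5 : r ^ c = r * r ^ (c - 1) := by
        rw [Real.rpow_sub hr, Real.rpow_one]
        field_simp
      have hP4 : r ^ (c + 1) = r * (r * r ^ (c - 1)) := by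
        rw [Real.rpow_add hr, Real.rpow_one, Real.rpow_sub hr, Real.rpow_one]
        field_simp
      simp only [hgdef, hqdef, hGdef, hhdef]
      set A := deriv v r with hA
      set B := v r with hB
      set s := r ^ ((c + 1) / 2) with hs
      set t := r ^ ((c - 1) / 2) with ht
      have h1' : s * s = r ^ (c + 1) := by
        rw [hs, ← Real.rpow_add hr]; ring_nf
      have h2' : s * t = r ^ c := by
        rw [hs, ht, ← Real.rpow_add hr]; ring_nf
      have h3' : t * t = r ^ (c - 1) := by
        rw [ht, ← Real.rpow_add hr]; ring_nf
      rw [hP4] at h1'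
      rw [hP5] at h2'
      have hqexp : (A * s + c / 2 * B * t) ^ 2
          = A ^ 2 * (s * s) + c * A * B * (s * t) + c ^ 2 / 4 * B ^ 2 * (t * t) := by
        ring
      rw [hP4, hP5, hqexp, h1', h2', h3']
      field_simp
      ring
  -- integrands vanish on the complement of Ioi 0
  have hg_Ioi : ∫ r in Set.Ioi (0:ℝ), g r = ∫ r, g r := by
    refine setIntegral_eq_integral_of_forall_compl_eq_zero ?_
    intro x hx
    have hx0 : x ≤ 0 := not_lt.mp hx
    have hxK : x ∉ K := fun hxK => absurd (lt_of_lt_of_le hε (hKlb x hxK)) (not_lt.mpr hx0)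
    simp [hgdef, hv0 x hxK, hv'0 x hxK]
  have hh_Ioi : ∫ r in Set.Ioi (0:ℝ), h r = ∫ r, h r := by
    refine setIntegral_eq_integral_of_forall_compl_eq_zero ?_
    intro x hx
    have hx0 : x ≤ 0 := not_lt.mp hx
    have hxK : x ∉ K := fun hxK => absurd (lt_of_lt_of_le hε (hKlb x hxK)) (not_lt.mpr hx0)
    simp [hhdef, hv0 x hxK]
  -- put everything together
  have hsplit : ∫ r, g r = (∫ r, q r) + (∫ r, G r) + (c-2)^2/4 * ∫ r, h r := by
    have hfe : (fun r => g r) = fun r => q r + G r + (c-2)^2/4 * h r := funext hkey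
    have e1 : ∫ r, (q r + G r + (c-2)^2/4 * h r)
        = (∫ r, (q r + G r)) + ∫ r, (c-2)^2/4 * h r :=
      integral_add (hq_int.add hG_int) (hh_int.const_mul _)
    have e2 : ∫ r, (q r + G r) = (∫ r, q r) + ∫ r, G r := integral_add hq_int hG_int
    rw [hfe, e1, e2, MeasureTheory.integral_const_mul, MeasureTheory.integral_const_mul]
  have hq_nonneg : 0 ≤ ∫ r, q r := integral_nonneg (fun r => sq_nonneg _)
  calc (Nbar - 2) ^ 2 / 4 * ∫ r in Set.Ioi (0:ℝ), (deriv u r) ^ 2 * r ^ (Nbar - 1)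
      = (c-2)^2/4 * ∫ r, h r := by rw [← hh_Ioi]
    _ ≤ (∫ r, q r) + (∫ r, G r) + (c-2)^2/4 * ∫ r, h r := by
        rw [hGzero]; linarith
    _ = ∫ r, g r := hsplit.symm
    _ = ∫ r in Set.Ioi (0:ℝ), g r := hg_Ioi.symm
end
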